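/- arXiv:2401.08437 — 2 statements merged into one kernel-verified Lean document; each statement's English description precedes it below -/
import Mathlib

section
/- Let λ ∈ ℤ^D \ {0} and let (φ, ψ) be a λ-mode wave solution on (0,∞). Then: (i) there is C > 0 depending only on D and p_1,…,p_D such that for every t ≥ t_{λ*}, |t·(d/dt)E_{λ,high}(t)| ≤ C·(t|ζ_λ′(t)| + τ_λ(t)^{−2})·E_{λ,high}(t); (ii) there is C_high > 0 depending only on D and p_1,…,p_D such that for every t with t_{λ*} ≤ t ≤ 1: C_high^{−1}·E_{λ,high}(t) ≤ E_{λ,high}(1) ≤ C_high·E_{λ,high}(t). -/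
open Real Filter MeasureTheory Topology

/-- τ_λ(t) = (∑ᵢ t^(2-2pᵢ) λᵢ²)^(1/2). -/
noncomputable def tau {D : ℕ} (p : Fin D → ℝ) (lam : Fin D → ℤ) (t : ℝ) : ℝ :=
  Real.sqrt (∑ i, t ^ (2 - 2 * p i) * ((lam i : ℝ)) ^ 2)

/-- ζ_λ(t) = 2τ_λ(t)² / ∑ᵢ (2-2pᵢ) t^(2-2pᵢ) λᵢ². -/
noncomputable def zeta {D : ℕ} (p : Fin D → ℝ) (lam : Fin D → ℤ) (t : ℝ) : ℝ :=
  2 * tau p lam t ^ 2 / ∑ i, (2 - 2 * p i) * t ^ (2 - 2 * p i) * ((lam i : ℝ)) ^ 2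

/-- A λ-mode wave solution on the set `I`: t φ' = ψ and t ψ' = -τ_λ(t)² φ. -/
def IsWaveSol {D : ℕ} (p : Fin D → ℝ) (lam : Fin D → ℤ) (φ ψ : ℝ → ℝ) (I : Set ℝ) : Prop :=
  ∀ t ∈ I, HasDerivAt φ (ψ t / t) t ∧ HasDerivAt ψ (-(tau p lam t ^ 2) * φ t / t) t

/-- The high-frequency wave energy E_{λ,high}. -/
noncomputable def Ehigh {D : ℕ} (p : Fin D → ℝ) (lam : Fin D → ℤ) (φ ψ : ℝ → ℝ) (t : ℝ) : ℝ :=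
  zeta p lam t ^ 2 * ψ t ^ 2 / tau p lam t + zeta p lam t * ψ t * φ t / tau p lam t
    + φ t ^ 2 / (2 * tau p lam t) + zeta p lam t ^ 2 * tau p lam t * φ t ^ 2

/-! The energy is a positive definite quadratic form in `(ψ, φ)` whose coefficients involve `ζ`
and `τ`. Along a solution, because `τ' = τ / (t ζ)`, everything cancels in `t E'` except the term
carrying `t ζ'` and the term `φ² / (2 τ ζ)`; these are bounded by the energy times `t |ζ'|` and
`τ⁻²` respectively, uniformly because `ζ` stays between `2 / max (2 - 2pᵢ)` and `2 / min (2 - 2pᵢ)`.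
This gives (i). For (ii), `ζ` is nonincreasing (Cauchy–Schwarz) and
`τ(s)² ≥ (s / t_*)^{min (2 - 2pᵢ)}`, so the rate in (i) is at most the derivative of an explicit
weight whose variation over `[t_*, 1]` is bounded; Grönwall's inequality in both directions then
compares `E(t)` with `E(1)`. -/

open Set

section RpowSum

open Finset

variable {ι : Type*} [Fintype ι]

noncomputable def rpowSum (a w : ι → ℝ) (t : ℝ) : ℝ := ∑ i, w i * t ^ a i

variable {a w : ι → ℝ} {c s t : ℝ}

lemma rpowSum_nonneg (hw : 0 ≤ w) (ht : 0 ≤ t) : 0 ≤ rpowSum a w t :=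
  sum_nonneg fun i _ => mul_nonneg (hw i) (rpow_nonneg ht _)

lemma rpowSum_pos (hw : 0 ≤ w) (hpos : ∃ i, 0 < w i) (ht : 0 < t) : 0 < rpowSum a w t := by
  obtain ⟨i, hi⟩ := hpos
  exact sum_pos' (fun j _ => mul_nonneg (hw j) (rpow_nonneg ht.le _))
    ⟨i, mem_univ i, mul_pos hi (rpow_pos_of_pos ht _)⟩

lemma hasDerivAt_rpowSum (ht : 0 < t) :
    HasDerivAt (rpowSum a w) (rpowSum a (a * w) t / t) t := by
  have hterm : ∀ i ∈ (univ : Finset ι),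
      HasDerivAt (fun s => w i * s ^ a i) (a i * w i * t ^ a i / t) t := by
    intro i _
    refine ((hasDerivAt_rpow_const (p := a i) (Or.inl ht.ne')).const_mul (w i)).congr_deriv ?_
    rw [rpow_sub_one ht.ne']
    ring
  rw [rpowSum, sum_div]
  exact HasDerivAt.fun_sum hterm

lemma rpowSum_le_mul (hw : 0 ≤ w) (ht : 0 ≤ t) (ha : ∀ i, a i ≤ c) :
    rpowSum a (a * w) t ≤ c * rpowSum a w t := by
  rw [rpowSum, rpowSum, mul_sum]
  refine sum_le_sum fun i _ => ?_
  simpa only [Pi.mul_apply, mul_assoc] using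
    mul_le_mul_of_nonneg_right (ha i) (mul_nonneg (hw i) (rpow_nonneg ht (a i)))

lemma mul_le_rpowSum (hw : 0 ≤ w) (ht : 0 ≤ t) (ha : ∀ i, c ≤ a i) :
    c * rpowSum a w t ≤ rpowSum a (a * w) t := by
  rw [rpowSum, rpowSum, mul_sum]
  refine sum_le_sum fun i _ => ?_
  simpa only [Pi.mul_apply, mul_assoc] using
    mul_le_mul_of_nonneg_right (ha i) (mul_nonneg (hw i) (rpow_nonneg ht (a i)))

lemma sq_rpowSum_le (hw : 0 ≤ w) (ht : 0 ≤ t) :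
    rpowSum a (a * w) t ^ 2 ≤ rpowSum a w t * rpowSum a (a * (a * w)) t :=
  sum_sq_le_sum_mul_sum_of_sq_le_mul univ
    (fun i _ => mul_nonneg (hw i) (rpow_nonneg ht _))
    (fun i _ => by
      rw [Pi.mul_apply, Pi.mul_apply, ← mul_assoc, ← sq]
      exact mul_nonneg (mul_nonneg (sq_nonneg _) (hw i)) (rpow_nonneg ht _))
    (fun i _ => le_of_eq (by simp only [Pi.mul_apply]; ring))

lemma rpowSum_mul_rpow_le (hw : 0 ≤ w) (ha : ∀ i, c ≤ a i) (hs : 0 < s) (hst : s ≤ t) :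
    rpowSum a w s * (t / s) ^ c ≤ rpowSum a w t := by
  rw [rpowSum, rpowSum, sum_mul]
  refine sum_le_sum fun i _ => ?_
  have hscale : s ^ a i * (t / s) ^ a i = t ^ a i := by
    rw [← mul_rpow hs.le (div_nonneg (hs.trans_le hst).le hs.le), mul_div_cancel₀ _ hs.ne']
  have hpow : (t / s) ^ c ≤ (t / s) ^ a i :=
    rpow_le_rpow_of_exponent_le ((one_le_div hs).2 hst) (ha i)
  calc w i * s ^ a i * (t / s) ^ c ≤ w i * s ^ a i * (t / s) ^ a i :=
        mul_le_mul_of_nonneg_left hpow (mul_nonneg (hw i) (rpow_nonneg hs.le _))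
    _ = w i * t ^ a i := by rw [mul_assoc, hscale]

end RpowSum

lemma exists_pos_bounds_of_finite {ι : Type*} [Finite ι] (f : ι → ℝ) (hf : ∀ i, 0 < f i) :
    ∃ a b : ℝ, 0 < a ∧ 0 < b ∧ ∀ i, a ≤ f i ∧ f i ≤ b := by
  cases isEmpty_or_nonempty ι
  · exact ⟨1, 1, one_pos, one_pos, isEmptyElim⟩
  · obtain ⟨i, hi⟩ := Finite.exists_min f
    obtain ⟨j, hj⟩ := Finite.exists_max f
    exact ⟨f i, f j, hf i, hf j, fun k => ⟨hi k, hj k⟩⟩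

section HighFrequencyEnergy

/-- `Ehigh p lam φ ψ t` is, by definition,
`highFreqEnergy (zeta p lam t) (tau p lam t) (ψ t) (φ t)`. -/
noncomputable def highFreqEnergy (Z A x y : ℝ) : ℝ :=
  Z ^ 2 * x ^ 2 / A + Z * x * y / A + y ^ 2 / (2 * A) + Z ^ 2 * A * y ^ 2

noncomputable def highFreqEnergyDerivZ (Z A x y : ℝ) : ℝ :=
  2 * Z * x ^ 2 / A + x * y / A + 2 * Z * A * y ^ 2

variable {m Z A x y : ℝ}

lemma highFreqEnergy_coercive (hA : 0 < A) :
    Z ^ 2 * x ^ 2 / 4 + y ^ 2 / 6 + Z ^ 2 * (A * y) ^ 2 ≤ A * highFreqEnergy Z A x y := by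
  have hAE : A * highFreqEnergy Z A x y
      = Z ^ 2 * x ^ 2 + Z * x * y + y ^ 2 / 2 + Z ^ 2 * (A * y) ^ 2 := by
    rw [highFreqEnergy]; field_simp
  nlinarith [sq_nonneg (3 * Z * x + 2 * y)]

lemma highFreqEnergy_nonneg (hA : 0 < A) : 0 ≤ highFreqEnergy Z A x y := by
  have h0 : 0 ≤ Z ^ 2 * x ^ 2 / 4 + y ^ 2 / 6 + Z ^ 2 * (A * y) ^ 2 := by positivity
  exact nonneg_of_mul_nonneg_right (h0.trans (highFreqEnergy_coercive hA)) hA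

lemma abs_highFreqEnergyDerivZ_le (hm : 0 < m) (hmZ : m ≤ Z) (hA : 0 < A) :
    |highFreqEnergyDerivZ Z A x y| ≤ 15 / m * highFreqEnergy Z A x y := by
  have hZ : 0 < Z := hm.trans_le hmZ
  have hcoer := highFreqEnergy_coercive (Z := Z) (x := x) (y := y) hA
  set E := highFreqEnergy Z A x y
  have hE : 0 ≤ E := highFreqEnergy_nonneg hA
  set G := 2 * Z * x ^ 2 + x * y + 2 * Z * (A * y) ^ 2
  -- `Z x y` is controlled by AM-GM through the two squares `(Z x)²` and `y²` of the energy.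
  have hZG : |Z * G| ≤ 15 * (A * E) := by
    refine abs_le.2 ⟨?_, ?_⟩ <;>
      nlinarith [sq_nonneg (Z * x - y), sq_nonneg (Z * x + y), sq_nonneg (Z * x),
        sq_nonneg (Z * (A * y)), sq_nonneg y]
  have hF : highFreqEnergyDerivZ Z A x y = Z * G / (Z * A) := by
    rw [highFreqEnergyDerivZ]
    field_simp
    ring
  calc |highFreqEnergyDerivZ Z A x y| = |Z * G| / (Z * A) := by
        rw [hF, abs_div, abs_of_pos (mul_pos hZ hA)]
    _ ≤ 15 * (A * E) / (Z * A) := by gcongr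
    _ = 15 / Z * E := by field_simp
    _ ≤ 15 / m * E := by gcongr

lemma sq_div_le_highFreqEnergy (hm : 0 < m) (hmZ : m ≤ Z) (hA : 0 < A) :
    y ^ 2 / (2 * A * Z) ≤ highFreqEnergy Z A x y / (2 * m ^ 3 * A ^ 2) := by
  have hZ : 0 < Z := hm.trans_le hmZ
  have hcoer := highFreqEnergy_coercive (Z := Z) (x := x) (y := y) hA
  have hE : 0 ≤ highFreqEnergy Z A x y := highFreqEnergy_nonneg hA
  calc y ^ 2 / (2 * A * Z) = Z ^ 2 * (A * y) ^ 2 / (2 * A ^ 3 * Z ^ 3) := by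
        field_simp
    _ ≤ A * highFreqEnergy Z A x y / (2 * A ^ 3 * Z ^ 3) := by
        refine div_le_div_of_nonneg_right ?_ (by positivity)
        nlinarith [sq_nonneg (Z * x), sq_nonneg y]
    _ = highFreqEnergy Z A x y / (2 * Z ^ 3 * A ^ 2) := by field_simp
    _ ≤ highFreqEnergy Z A x y / (2 * m ^ 3 * A ^ 2) := by gcongr

lemma abs_highFreqEnergy_rate_le {Z' t : ℝ} (hm : 0 < m) (hmZ : m ≤ Z) (hA : 0 < A) (ht : 0 ≤ t) :
    |t * Z' * highFreqEnergyDerivZ Z A x y - y ^ 2 / (2 * A * Z)|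
      ≤ (15 / m + 1 / (2 * m ^ 3)) * (t * |Z'| + (A ^ 2)⁻¹) * highFreqEnergy Z A x y := by
  have hZ : 0 < Z := hm.trans_le hmZ
  have hE : 0 ≤ highFreqEnergy Z A x y := highFreqEnergy_nonneg hA
  have hdZ : t * |Z'| * |highFreqEnergyDerivZ Z A x y|
      ≤ t * |Z'| * (15 / m * highFreqEnergy Z A x y) :=
    mul_le_mul_of_nonneg_left (abs_highFreqEnergyDerivZ_le hm hmZ hA) (by positivity)
  have hrem : y ^ 2 / (2 * A * Z) ≤ 1 / (2 * m ^ 3) * (A ^ 2)⁻¹ * highFreqEnergy Z A x y :=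
    (sq_div_le_highFreqEnergy (x := x) hm hmZ hA).trans_eq (by field_simp)
  have hcross : 0 ≤ 15 / m * (A ^ 2)⁻¹ * highFreqEnergy Z A x y
      + 1 / (2 * m ^ 3) * (t * |Z'|) * highFreqEnergy Z A x y := by positivity
  calc _ ≤ |t * Z' * highFreqEnergyDerivZ Z A x y| + |y ^ 2 / (2 * A * Z)| := abs_sub _ _
    _ = t * |Z'| * |highFreqEnergyDerivZ Z A x y| + y ^ 2 / (2 * A * Z) := by
      rw [abs_mul, abs_mul, abs_of_nonneg ht,
        abs_of_nonneg (by positivity : 0 ≤ y ^ 2 / (2 * A * Z))]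
    _ ≤ _ := by nlinarith

end HighFrequencyEnergy

-- `A' = A / (t Z)` is the relation `ζ = τ / (t τ')`; with it and the mode equations, every term of
-- the derivative cancels except those carrying `Z'` and the damping term `y² / (2 A Z)`.
lemma hasDerivAt_highFreqEnergy {Z A x y : ℝ → ℝ} {Z' t : ℝ} (ht : t ≠ 0) (hA0 : A t ≠ 0)
    (hZ0 : Z t ≠ 0) (hZ : HasDerivAt Z Z' t) (hA : HasDerivAt A (A t / (t * Z t)) t)
    (hx : HasDerivAt x (-(A t ^ 2) * y t / t) t) (hy : HasDerivAt y (x t / t) t) :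
    HasDerivAt (fun s => highFreqEnergy (Z s) (A s) (x s) (y s))
      ((t * Z' * highFreqEnergyDerivZ (Z t) (A t) (x t) (y t) - y t ^ 2 / (2 * A t * Z t)) / t)
      t := by
  have h1 := ((hZ.pow 2).mul (hx.pow 2)).div hA hA0
  have h2 := ((hZ.mul hx).mul hy).div hA hA0
  have h3 := (hy.pow 2).div (hA.const_mul 2) (mul_ne_zero two_ne_zero hA0)
  have h4 := ((hZ.pow 2).mul hA).mul (hy.pow 2)
  refine (((h1.add h2).add h3).add h4).congr_deriv ?_
  simp only [highFreqEnergyDerivZ, Pi.mul_apply, Pi.pow_apply]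
  field_simp
  ring

section Gronwall

variable {f g f' g' : ℝ → ℝ}

lemma monotoneOn_mul_exp {s : Set ℝ} (hs : Convex ℝ s)
    (hf : ∀ x ∈ s, HasDerivAt f (f' x) x) (hg : ∀ x ∈ s, HasDerivAt g (g' x) x)
    (h : ∀ x ∈ s, 0 ≤ f' x + g' x * f x) : MonotoneOn (fun x => f x * exp (g x)) s := by
  have hd : ∀ x ∈ s,
      HasDerivAt (fun x => f x * exp (g x)) ((f' x + g' x * f x) * exp (g x)) x :=
    fun x hx => ((hf x hx).mul (hg x hx).exp).congr_deriv (by ring)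
  refine monotoneOn_of_deriv_nonneg hs (fun x hx => (hd x hx).continuousAt.continuousWithinAt)
    (fun x hx => (hd x (interior_subset hx)).differentiableAt.differentiableWithinAt)
    fun x hx => ?_
  rw [(hd x (interior_subset hx)).deriv]
  exact mul_nonneg (h x (interior_subset hx)) (exp_pos _).le

lemma le_exp_mul_of_abs_deriv_le {a b : ℝ} (hab : a ≤ b)
    (hf : ∀ x ∈ Icc a b, HasDerivAt f (f' x) x) (hg : ∀ x ∈ Icc a b, HasDerivAt g (g' x) x)
    (h : ∀ x ∈ Icc a b, |f' x| ≤ g' x * f x) :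
    f b ≤ exp (g b - g a) * f a ∧ f a ≤ exp (g b - g a) * f b := by
  have ha : a ∈ Icc a b := left_mem_Icc.2 hab
  have hb : b ∈ Icc a b := right_mem_Icc.2 hab
  have hup := monotoneOn_mul_exp (convex_Icc a b) hf hg
    (fun x hx => by linarith [neg_abs_le (f' x), h x hx]) ha hb hab
  have hdown := monotoneOn_mul_exp (f := fun x => -f x) (f' := fun x => -f' x)
    (g := fun x => -g x) (g' := fun x => -g' x) (convex_Icc a b)
    (fun x hx => (hf x hx).neg) (fun x hx => (hg x hx).neg)
    (fun x hx => by linarith [le_abs_self (f' x), h x hx]) ha hb hab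
  simp only at hup hdown
  rw [exp_sub]
  constructor
  · rw [div_mul_eq_mul_div, le_div_iff₀ (exp_pos _)]
    rw [exp_neg, exp_neg] at hdown
    field_simp at hdown
    linarith
  · rw [div_mul_eq_mul_div, le_div_iff₀ (exp_pos _)]
    linarith

end Gronwall

section KasnerMode

variable {D : ℕ} {p : Fin D → ℝ} {lam : Fin D → ℤ} {cmin cmax t : ℝ}

def kasnerExp (p : Fin D → ℝ) : Fin D → ℝ := fun i => 2 - 2 * p i

def modeWeight (lam : Fin D → ℤ) : Fin D → ℝ := fun i => (lam i : ℝ) ^ 2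

lemma kasnerExp_pos (hp : ∀ i, p i < 1) (i : Fin D) : 0 < kasnerExp p i := by
  simp only [kasnerExp]
  linarith [hp i]

lemma modeWeight_nonneg : 0 ≤ modeWeight lam := fun _ => sq_nonneg _

lemma exists_modeWeight_pos (hlam : lam ≠ 0) : ∃ i, 0 < modeWeight lam i := by
  obtain ⟨i, hi⟩ := Function.ne_iff.1 hlam
  have : (lam i : ℝ) ≠ 0 := Int.cast_ne_zero.2 hi
  exact ⟨i, by simp only [modeWeight]; positivity⟩

lemma tau_eq_sqrt_rpowSum (t : ℝ) :
    tau p lam t = √(rpowSum (kasnerExp p) (modeWeight lam) t) := by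
  rw [tau, rpowSum]
  exact congrArg _ (Finset.sum_congr rfl fun _ _ => mul_comm _ _)

lemma tau_sq (ht : 0 ≤ t) : tau p lam t ^ 2 = rpowSum (kasnerExp p) (modeWeight lam) t := by
  rw [tau_eq_sqrt_rpowSum, sq_sqrt (rpowSum_nonneg modeWeight_nonneg ht)]

lemma tau_pos (hlam : lam ≠ 0) (ht : 0 < t) : 0 < tau p lam t := by
  rw [tau_eq_sqrt_rpowSum]
  exact sqrt_pos.2 (rpowSum_pos modeWeight_nonneg (exists_modeWeight_pos hlam) ht)

lemma rpowSum_kasnerExp_mul_pos (hp : ∀ i, p i < 1) (hlam : lam ≠ 0) (ht : 0 < t) :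
    0 < rpowSum (kasnerExp p) (kasnerExp p * modeWeight lam) t := by
  obtain ⟨i, hi⟩ := exists_modeWeight_pos hlam
  refine rpowSum_pos (fun j => mul_nonneg (kasnerExp_pos hp j).le (modeWeight_nonneg j))
    ⟨i, mul_pos (kasnerExp_pos hp i) hi⟩ ht

lemma zeta_eq (ht : 0 ≤ t) :
    zeta p lam t = 2 * rpowSum (kasnerExp p) (modeWeight lam) t
      / rpowSum (kasnerExp p) (kasnerExp p * modeWeight lam) t := by
  rw [zeta, tau_sq ht]
  congr 1
  simp only [rpowSum, kasnerExp, modeWeight, Pi.mul_apply]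
  exact Finset.sum_congr rfl fun _ _ => by ring

lemma zeta_pos (hp : ∀ i, p i < 1) (hlam : lam ≠ 0) (ht : 0 < t) : 0 < zeta p lam t := by
  have hT := rpowSum_pos (a := kasnerExp p) modeWeight_nonneg (exists_modeWeight_pos hlam) ht
  rw [zeta_eq ht.le]
  exact div_pos (by positivity) (rpowSum_kasnerExp_mul_pos hp hlam ht)

lemma two_div_le_zeta (hp : ∀ i, p i < 1) (hlam : lam ≠ 0) (hcmax : ∀ i, kasnerExp p i ≤ cmax)
    (ht : 0 < t) : 2 / cmax ≤ zeta p lam t := by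
  have hT := rpowSum_pos (a := kasnerExp p) modeWeight_nonneg (exists_modeWeight_pos hlam) ht
  have hU := rpowSum_kasnerExp_mul_pos hp hlam ht
  have hUT := rpowSum_le_mul (w := modeWeight lam) modeWeight_nonneg ht.le hcmax
  have hcmax0 : 0 < cmax := pos_of_mul_pos_left (hU.trans_le hUT) hT.le
  rw [zeta_eq ht.le, div_le_div_iff₀ hcmax0 hU]
  linarith

lemma zeta_le_two_div (hp : ∀ i, p i < 1) (hlam : lam ≠ 0) (hcmin0 : 0 < cmin)
    (hcmin : ∀ i, cmin ≤ kasnerExp p i) (ht : 0 < t) : zeta p lam t ≤ 2 / cmin := by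
  have hU := rpowSum_kasnerExp_mul_pos hp hlam ht
  have hTU := mul_le_rpowSum (w := modeWeight lam) modeWeight_nonneg ht.le hcmin
  rw [zeta_eq ht.le, div_le_div_iff₀ hU hcmin0]
  linarith

lemma hasDerivAt_tau (hlam : lam ≠ 0) (ht : 0 < t) :
    HasDerivAt (tau p lam) (tau p lam t / (t * zeta p lam t)) t := by
  have hT := rpowSum_pos (a := kasnerExp p) modeWeight_nonneg (exists_modeWeight_pos hlam) ht
  have hsqrt := (hasDerivAt_rpowSum (a := kasnerExp p) (w := modeWeight lam) ht).sqrt hT.ne'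
  rw [show (fun s => √(rpowSum (kasnerExp p) (modeWeight lam) s)) = tau p lam from
    funext fun s => (tau_eq_sqrt_rpowSum s).symm] at hsqrt
  refine hsqrt.congr_deriv ?_
  rw [← tau_eq_sqrt_rpowSum, zeta_eq ht.le, ← tau_sq ht.le]
  field_simp

lemma hasDerivAt_zeta (hp : ∀ i, p i < 1) (hlam : lam ≠ 0) (ht : 0 < t) :
    HasDerivAt (zeta p lam)
      (2 * (rpowSum (kasnerExp p) (kasnerExp p * modeWeight lam) t ^ 2
          - rpowSum (kasnerExp p) (modeWeight lam) t
            * rpowSum (kasnerExp p) (kasnerExp p * (kasnerExp p * modeWeight lam)) t)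
        / (t * rpowSum (kasnerExp p) (kasnerExp p * modeWeight lam) t ^ 2)) t := by
  have hU := rpowSum_kasnerExp_mul_pos hp hlam ht
  have hquot := ((hasDerivAt_rpowSum (a := kasnerExp p) (w := modeWeight lam) ht).const_mul 2).div
    (hasDerivAt_rpowSum ht) hU.ne'
  refine (hquot.congr_deriv (by field_simp)).congr_of_eventuallyEq ?_
  filter_upwards [Ioi_mem_nhds ht] with s hs
  exact zeta_eq (le_of_lt hs)

lemma deriv_zeta_nonpos (hp : ∀ i, p i < 1) (hlam : lam ≠ 0) (ht : 0 < t) :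
    deriv (zeta p lam) t ≤ 0 := by
  rw [(hasDerivAt_zeta hp hlam ht).deriv]
  have hCS := sq_rpowSum_le (a := kasnerExp p) (w := modeWeight lam) modeWeight_nonneg ht.le
  exact div_nonpos_of_nonpos_of_nonneg (by linarith) (by positivity)

lemma hasDerivAt_Ehigh (hp : ∀ i, p i < 1) (hlam : lam ≠ 0) {φ ψ : ℝ → ℝ}
    (hsol : IsWaveSol p lam φ ψ (Ioi 0)) (ht : 0 < t) :
    HasDerivAt (Ehigh p lam φ ψ)
      ((t * deriv (zeta p lam) t * highFreqEnergyDerivZ (zeta p lam t) (tau p lam t) (ψ t) (φ t)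
        - φ t ^ 2 / (2 * tau p lam t * zeta p lam t)) / t) t :=
  hasDerivAt_highFreqEnergy ht.ne' (tau_pos hlam ht).ne' (zeta_pos hp hlam ht).ne'
    (hasDerivAt_zeta hp hlam ht).differentiableAt.hasDerivAt (hasDerivAt_tau hlam ht)
    (hsol t ht).2 (hsol t ht).1

end KasnerMode

section EnergyEstimates

variable {D : ℕ} {p : Fin D → ℝ} {lam : Fin D → ℤ} {φ ψ : ℝ → ℝ} {m cmin cmax C tstar t : ℝ}

lemma exists_hasDerivAt_Ehigh_abs_le (hp : ∀ i, p i < 1) (hlam : lam ≠ 0)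
    (hsol : IsWaveSol p lam φ ψ (Ioi 0)) (hm : 0 < m) (ht : 0 < t) (hmζ : m ≤ zeta p lam t) :
    ∃ E' : ℝ, HasDerivAt (Ehigh p lam φ ψ) E' t ∧
      |t * E'| ≤ (15 / m + 1 / (2 * m ^ 3)) * (t * |deriv (zeta p lam) t| + (tau p lam t ^ 2)⁻¹)
        * Ehigh p lam φ ψ t := by
  refine ⟨_, hasDerivAt_Ehigh hp hlam hsol ht, ?_⟩
  rw [mul_div_cancel₀ _ ht.ne']
  exact abs_highFreqEnergy_rate_le hm hmζ (tau_pos hlam ht) ht.le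

lemma Ehigh_nonneg (hlam : lam ≠ 0) (ht : 0 < t) : 0 ≤ Ehigh p lam φ ψ t :=
  highFreqEnergy_nonneg (tau_pos hlam ht)

lemma inv_tau_sq_le (hcmin : ∀ i, cmin ≤ kasnerExp p i) (h0 : 0 < tstar)
    (hts : tau p lam tstar = 1) (hst : tstar ≤ t) :
    (tau p lam t ^ 2)⁻¹ ≤ tstar ^ cmin * t ^ (-cmin) := by
  have ht : 0 < t := h0.trans_le hst
  have hgrowth := rpowSum_mul_rpow_le (modeWeight_nonneg (lam := lam)) hcmin h0 hst
  rw [← tau_sq h0.le, hts, one_pow, one_mul, ← tau_sq ht.le] at hgrowth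
  calc (tau p lam t ^ 2)⁻¹ ≤ ((t / tstar) ^ cmin)⁻¹ :=
        inv_anti₀ (rpow_pos_of_pos (div_pos ht h0) _) hgrowth
    _ = tstar ^ cmin * t ^ (-cmin) := by
        rw [div_rpow ht.le h0.le, rpow_neg ht.le, inv_div, div_eq_mul_inv]

lemma hasDerivAt_zeta_sub_rpow (hp : ∀ i, p i < 1) (hlam : lam ≠ 0) (hcmin0 : cmin ≠ 0)
    (ht : 0 < t) :
    HasDerivAt (fun s => -zeta p lam s - tstar ^ cmin * s ^ (-cmin) / cmin)
      (-deriv (zeta p lam) t + tstar ^ cmin * t ^ (-cmin) / t) t := by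
  have hrpow := ((hasDerivAt_rpow_const (p := -cmin) (Or.inl ht.ne')).const_mul
    (tstar ^ cmin)).div_const cmin
  refine ((hasDerivAt_zeta hp hlam ht).differentiableAt.hasDerivAt.neg.sub hrpow).congr_deriv ?_
  rw [rpow_sub_one ht.ne']
  field_simp
  ring

lemma Ehigh_le_exp_mul (hp : ∀ i, p i < 1) (hlam : lam ≠ 0) (hcmin0 : 0 < cmin)
    (hcmin : ∀ i, cmin ≤ kasnerExp p i) (hcmax : ∀ i, kasnerExp p i ≤ cmax) (hC : 0 ≤ C)
    (h0 : 0 < tstar) (hts : tau p lam tstar = 1)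
    (hrate : ∀ s ∈ Icc t 1, ∃ E' : ℝ, HasDerivAt (Ehigh p lam φ ψ) E' s ∧
      |s * E'| ≤ C * (s * |deriv (zeta p lam) s| + (tau p lam s ^ 2)⁻¹) * Ehigh p lam φ ψ s)
    (htt : tstar ≤ t) (ht1 : t ≤ 1) :
    Ehigh p lam φ ψ 1 ≤ exp (C * (2 / cmin - 2 / cmax + 1 / cmin)) * Ehigh p lam φ ψ t ∧
      Ehigh p lam φ ψ t ≤ exp (C * (2 / cmin - 2 / cmax + 1 / cmin)) * Ehigh p lam φ ψ 1 := by
  have ht : 0 < t := h0.trans_le htt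
  have hpos : ∀ s ∈ Icc t 1, 0 < s := fun s hs => ht.trans_le hs.1
  have hweight : ∀ s ∈ Icc t 1, HasDerivAt
      (fun s => C * (-zeta p lam s - tstar ^ cmin * s ^ (-cmin) / cmin))
      (C * (-deriv (zeta p lam) s + tstar ^ cmin * s ^ (-cmin) / s)) s :=
    fun s hs => (hasDerivAt_zeta_sub_rpow hp hlam hcmin0.ne' (hpos s hs)).const_mul C
  have hderiv : ∀ s ∈ Icc t 1, HasDerivAt (Ehigh p lam φ ψ) (deriv (Ehigh p lam φ ψ) s) s :=
    fun s hs => (hrate s hs).choose_spec.1.differentiableAt.hasDerivAt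
  have hbound : ∀ s ∈ Icc t 1, |deriv (Ehigh p lam φ ψ) s|
      ≤ C * (-deriv (zeta p lam) s + tstar ^ cmin * s ^ (-cmin) / s) * Ehigh p lam φ ψ s := by
    intro s hs
    obtain ⟨E', hE', hle⟩ := hrate s hs
    have hs0 := hpos s hs
    have hτ := inv_tau_sq_le (lam := lam) hcmin h0 hts (htt.trans hs.1)
    rw [abs_of_nonpos (deriv_zeta_nonpos hp hlam hs0)] at hle
    rw [hE'.deriv, ← mul_le_mul_iff_of_pos_left hs0, ← abs_of_pos hs0, ← abs_mul, abs_of_pos hs0]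
    refine hle.trans ?_
    calc C * (s * -deriv (zeta p lam) s + (tau p lam s ^ 2)⁻¹) * Ehigh p lam φ ψ s
        ≤ C * (s * -deriv (zeta p lam) s + tstar ^ cmin * s ^ (-cmin)) * Ehigh p lam φ ψ s := by
          gcongr
          exact Ehigh_nonneg hlam hs0
      _ = s * (C * (-deriv (zeta p lam) s + tstar ^ cmin * s ^ (-cmin) / s)
          * Ehigh p lam φ ψ s) := by
          field_simp
  have hvariation : C * (-zeta p lam 1 - tstar ^ cmin * 1 ^ (-cmin) / cmin)
      - C * (-zeta p lam t - tstar ^ cmin * t ^ (-cmin) / cmin)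
      ≤ C * (2 / cmin - 2 / cmax + 1 / cmin) := by
    have hζ1 := two_div_le_zeta hp hlam hcmax one_pos
    have hζt := zeta_le_two_div hp hlam hcmin0 hcmin ht
    have hpow : tstar ^ cmin * t ^ (-cmin) ≤ 1 := by
      rw [rpow_neg ht.le, ← div_eq_mul_inv, ← div_rpow h0.le ht.le]
      exact rpow_le_one (div_nonneg h0.le ht.le) ((div_le_one ht).2 htt) hcmin0.le
    have hdecay : (tstar ^ cmin * t ^ (-cmin) - tstar ^ cmin) / cmin ≤ 1 / cmin :=
      div_le_div_of_nonneg_right (by linarith [rpow_nonneg h0.le cmin]) hcmin0.le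
    rw [one_rpow, mul_one]
    calc _ = C * ((zeta p lam t - zeta p lam 1)
          + (tstar ^ cmin * t ^ (-cmin) - tstar ^ cmin) / cmin) := by ring
      _ ≤ _ := mul_le_mul_of_nonneg_left (by linarith) hC
  obtain ⟨hone, hback⟩ := le_exp_mul_of_abs_deriv_le ht1 hderiv hweight hbound
  have hexp := exp_le_exp.2 hvariation
  exact ⟨hone.trans (mul_le_mul_of_nonneg_right hexp (Ehigh_nonneg hlam ht)),
    hback.trans (mul_le_mul_of_nonneg_right hexp (Ehigh_nonneg hlam one_pos))⟩

end EnergyEstimates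

theorem wave_high_freq_energy_estimate_general (D : ℕ) (p : Fin D → ℝ)
    (hp : ∀ i, p i < 1) :
    (∃ C : ℝ, 0 < C ∧
      ∀ (lam : Fin D → ℤ), lam ≠ 0 →
      ∀ tstar : ℝ, 0 < tstar → tstar ≤ 1 → tau p lam tstar = 1 →
      ∀ φ ψ : ℝ → ℝ, IsWaveSol p lam φ ψ (Set.Ioi 0) →
      ∀ t : ℝ, tstar ≤ t →
        ∃ E' : ℝ, HasDerivAt (Ehigh p lam φ ψ) E' t ∧
          |t * E'| ≤ C * (t * |deriv (zeta p lam) t| + (tau p lam t ^ 2)⁻¹)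
              * Ehigh p lam φ ψ t) ∧
    (∃ Chigh : ℝ, 0 < Chigh ∧
      ∀ (lam : Fin D → ℤ), lam ≠ 0 →
      ∀ tstar : ℝ, 0 < tstar → tstar ≤ 1 → tau p lam tstar = 1 →
      ∀ φ ψ : ℝ → ℝ, IsWaveSol p lam φ ψ (Set.Ioi 0) →
      ∀ t : ℝ, tstar ≤ t → t ≤ 1 →
        Chigh⁻¹ * Ehigh p lam φ ψ t ≤ Ehigh p lam φ ψ 1 ∧
        Ehigh p lam φ ψ 1 ≤ Chigh * Ehigh p lam φ ψ t) := by
  obtain ⟨cmin, cmax, hcmin0, hcmax0, hc⟩ :=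
    exists_pos_bounds_of_finite (kasnerExp p) (kasnerExp_pos hp)
  set C := 15 / (2 / cmax) + 1 / (2 * (2 / cmax) ^ 3)
  have hrate : ∀ lam : Fin D → ℤ, lam ≠ 0 → ∀ φ ψ : ℝ → ℝ, IsWaveSol p lam φ ψ (Ioi 0) →
      ∀ t : ℝ, 0 < t → ∃ E' : ℝ, HasDerivAt (Ehigh p lam φ ψ) E' t ∧
        |t * E'| ≤ C * (t * |deriv (zeta p lam) t| + (tau p lam t ^ 2)⁻¹) * Ehigh p lam φ ψ t :=
    fun lam hlam φ ψ hsol t ht => exists_hasDerivAt_Ehigh_abs_le hp hlam hsol (by positivity) ht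
      (two_div_le_zeta hp hlam (fun i => (hc i).2) ht)
  refine ⟨⟨C, by positivity, fun lam hlam tstar h0 _ _ φ ψ hsol t htt =>
    hrate lam hlam φ ψ hsol t (h0.trans_le htt)⟩,
    ⟨exp (C * (2 / cmin - 2 / cmax + 1 / cmin)), exp_pos _,
      fun lam hlam tstar h0 _ hts φ ψ hsol t htt ht1 => ?_⟩⟩
  obtain ⟨hone, hback⟩ := Ehigh_le_exp_mul hp hlam hcmin0 (fun i => (hc i).1) (fun i => (hc i).2)
    (by positivity) h0 hts (fun s hs => hrate lam hlam φ ψ hsol s (h0.trans_le (htt.trans hs.1)))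
    htt ht1
  exact ⟨(inv_mul_le_iff₀ (exp_pos _)).2 hback, hone⟩

/-- Proposition `prop:wave_high_freq`: the high-frequency energy estimate for the wave equation. -/
theorem wave_high_freq_energy_estimate (D : ℕ) (hD : 2 ≤ D) (p : Fin D → ℝ)
    (hp : ∀ i, p i < 1) :
    (∃ C : ℝ, 0 < C ∧
      ∀ (lam : Fin D → ℤ), lam ≠ 0 →
      ∀ tstar : ℝ, 0 < tstar → tstar ≤ 1 → tau p lam tstar = 1 →
      ∀ φ ψ : ℝ → ℝ, IsWaveSol p lam φ ψ (Set.Ioi 0) →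
      ∀ t : ℝ, tstar ≤ t →
        ∃ E' : ℝ, HasDerivAt (Ehigh p lam φ ψ) E' t ∧
          |t * E'| ≤ C * (t * |deriv (zeta p lam) t| + (tau p lam t ^ 2)⁻¹)
              * Ehigh p lam φ ψ t) ∧
    (∃ Chigh : ℝ, 0 < Chigh ∧
      ∀ (lam : Fin D → ℤ), lam ≠ 0 →
      ∀ tstar : ℝ, 0 < tstar → tstar ≤ 1 → tau p lam tstar = 1 →
      ∀ φ ψ : ℝ → ℝ, IsWaveSol p lam φ ψ (Set.Ioi 0) →
      ∀ t : ℝ, tstar ≤ t → t ≤ 1 →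
        Chigh⁻¹ * Ehigh p lam φ ψ t ≤ Ehigh p lam φ ψ 1 ∧
        Ehigh p lam φ ψ 1 ≤ Chigh * Ehigh p lam φ ψ t) :=
  wave_high_freq_energy_estimate_general D p hp
end

section
/- Let λ ∈ ℤ^D \ {0} and let (φ, ψ) be a λ-mode wave solution on (0,∞). Then: (i) there is C > 0 depending only on D and p_1,…,p_D such that for every t ∈ (0, t_{λ*}], |t·(d/dt)E_{λ,low}(t)| ≤ C·τ_λ(t)²·(1 + log(t_{λ*}/t)²)·E_{λ,low}(t); (ii) there is C_low > 0 depending only on D and p_1,…,p_D such that for every t ∈ (0, t_{λ*}]: C_low^{−1}·E_{λ,low}(t) ≤ E_{λ,low}(t_{λ*}) ≤ C_low·E_{λ,low}(t). -/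
/-! With `L = log (t / t_*)` and `φ̃ = φ - ψ L`, the equations give `t E_low' = 2 τ² φ (L φ̃ - ψ)`,
while `φ² + (L φ̃ - ψ)² = (1 + L²) E_low`; so `|t E_low'| ≤ τ² (1 + L²) E_low` by AM-GM.

For (ii), Grönwall's inequality on `[t, t_*]` with the weight `τ(s)² (1 + L²) / s` reduces the
claim to bounding the integral of that weight. Since `τ(s)² = ∑ᵢ s^aᵢ λᵢ²` with `aᵢ = 2 - 2 pᵢ > 0`,
it has the explicit primitive `∑ᵢ λᵢ² s^aᵢ ((L - 1/aᵢ)² + 1 + 1/aᵢ²) / aᵢ`, which is nonnegative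
and at `s = t_*` is at most `maxᵢ (1 + 2/aᵢ²)/aᵢ · τ(t_*)² = maxᵢ (1 + 2/aᵢ²)/aᵢ`. -/

open Real Filter MeasureTheory Topology

/-- The low-frequency wave energy E_{λ,low}(t) = ψ(t)² + φ̃(t)², where
φ̃(t) = φ(t) - ψ(t) log(t/t_{λ*}). -/
noncomputable def Elow (φ ψ : ℝ → ℝ) (tstar t : ℝ) : ℝ :=
  ψ t ^ 2 + (φ t - ψ t * Real.log (t / tstar)) ^ 2

lemma le_exp_sub_mul_of_neg_mul_le_deriv {f f' B B' : ℝ → ℝ} {a b : ℝ} (hab : a ≤ b)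
    (hf : ∀ x ∈ Set.Icc a b, HasDerivAt f (f' x) x)
    (hB : ∀ x ∈ Set.Icc a b, HasDerivAt B (B' x) x)
    (hf' : ∀ x ∈ Set.Ioo a b, -(B' x * f x) ≤ f' x) :
    f a ≤ exp (B b - B a) * f b := by
  have hg : ∀ x ∈ Set.Icc a b,
      HasDerivAt (fun y => f y * exp (B y)) (exp (B x) * (f' x + B' x * f x)) x := fun x hx =>
    ((hf x hx).mul (hB x hx).exp).congr_deriv (by ring)
  have hmono : MonotoneOn (fun y => f y * exp (B y)) (Set.Icc a b) := by
    refine monotoneOn_of_hasDerivWithinAt_nonneg (f' := fun x => exp (B x) * (f' x + B' x * f x))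
      (convex_Icc a b)
      (fun x hx => (hg x hx).continuousAt.continuousWithinAt) (fun x hx => ?_) (fun x hx => ?_)
    all_goals rw [interior_Icc] at hx
    · exact (hg x (Set.Ioo_subset_Icc_self hx)).hasDerivWithinAt
    · exact mul_nonneg (exp_pos _).le (by linarith [hf' x hx])
  have := hmono (Set.left_mem_Icc.2 hab) (Set.right_mem_Icc.2 hab) hab
  rw [exp_sub, div_mul_eq_mul_div, le_div_iff₀ (exp_pos _)]
  simpa only [mul_comm (exp (B b))] using this

lemma gronwall_two_sided {f f' B B' : ℝ → ℝ} {a b : ℝ} (hab : a ≤ b)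
    (hf : ∀ x ∈ Set.Icc a b, HasDerivAt f (f' x) x)
    (hB : ∀ x ∈ Set.Icc a b, HasDerivAt B (B' x) x)
    (hf' : ∀ x ∈ Set.Ioo a b, |f' x| ≤ B' x * f x) :
    f a ≤ exp (B b - B a) * f b ∧ f b ≤ exp (B b - B a) * f a := by
  constructor
  · exact le_exp_sub_mul_of_neg_mul_le_deriv hab hf hB fun x hx => neg_le_of_abs_le (hf' x hx)
  · -- the one-sided bound for `-f` and `-B`
    have := le_exp_sub_mul_of_neg_mul_le_deriv hab (fun x hx => (hf x hx).neg)
      (fun x hx => (hB x hx).neg) fun x hx => by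
        simp only [Pi.neg_apply]
        linarith [le_of_abs_le (hf' x hx)]
    simp only [Pi.neg_apply, show -B b - -B a = -(B b - B a) by ring, exp_neg] at this
    rw [← inv_mul_le_iff₀ (exp_pos _)]
    linarith

noncomputable def rpowLogSqPrimitive (a c s : ℝ) : ℝ :=
  s ^ a * (((log (s / c) - a⁻¹) ^ 2 + 1 + a⁻¹ ^ 2) / a)

lemma hasDerivAt_log_div_const {c s : ℝ} (hc : c ≠ 0) (hs : s ≠ 0) :
    HasDerivAt (fun u => log (u / c)) s⁻¹ s := by
  convert ((hasDerivAt_id' s).div_const c).log (div_ne_zero hs hc) using 1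
  field_simp

lemma hasDerivAt_rpowLogSqPrimitive {a c s : ℝ} (ha : a ≠ 0) (hc : c ≠ 0) (hs : 0 < s) :
    HasDerivAt (rpowLogSqPrimitive a c) (s ^ (a - 1) * (1 + log (s / c) ^ 2)) s := by
  have hL := hasDerivAt_log_div_const hc hs.ne'
  have h := (hasDerivAt_rpow_const (p := a) (Or.inl hs.ne')).mul
    ((((hL.sub_const a⁻¹).fun_pow 2).add_const 1 |>.add_const (a⁻¹ ^ 2)).div_const a)
  refine h.congr_deriv ?_
  rw [rpow_sub_one hs.ne']
  simp only [Nat.cast_ofNat, Nat.add_one_sub_one, pow_one]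
  field_simp
  ring

lemma rpowLogSqPrimitive_nonneg {a c s : ℝ} (ha : 0 < a) (hs : 0 ≤ s) :
    0 ≤ rpowLogSqPrimitive a c s := by
  unfold rpowLogSqPrimitive
  have := rpow_nonneg hs a
  positivity

lemma rpowLogSqPrimitive_self {a c : ℝ} (hc : c ≠ 0) :
    rpowLogSqPrimitive a c c = c ^ a * ((1 + 2 * a⁻¹ ^ 2) / a) := by
  simp only [rpowLogSqPrimitive, div_self hc, log_one]
  ring

section
variable {D : ℕ} (p : Fin D → ℝ) (lam : Fin D → ℤ)

noncomputable def lowFreqWeight (tstar s : ℝ) : ℝ :=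
  tau p lam s ^ 2 * (1 + log (s / tstar) ^ 2) / s

noncomputable def lowFreqWeightPrimitive (tstar s : ℝ) : ℝ :=
  ∑ i, (lam i : ℝ) ^ 2 * rpowLogSqPrimitive (2 - 2 * p i) tstar s

noncomputable def ElowDeriv (φ ψ : ℝ → ℝ) (tstar s : ℝ) : ℝ :=
  2 * tau p lam s ^ 2 * φ s * (log (s / tstar) * (φ s - ψ s * log (s / tstar)) - ψ s) / s

variable {p lam} {φ ψ : ℝ → ℝ}

lemma Elow_nonneg (tstar s : ℝ) : 0 ≤ Elow φ ψ tstar s := by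
  unfold Elow
  positivity

lemma tau_sq_s4 {s : ℝ} (hs : 0 ≤ s) :
    tau p lam s ^ 2 = ∑ i, s ^ (2 - 2 * p i) * (lam i : ℝ) ^ 2 :=
  sq_sqrt (Finset.sum_nonneg fun _ _ => mul_nonneg (rpow_nonneg hs _) (sq_nonneg _))

lemma hasDerivAt_lowFreqWeightPrimitive (hp : ∀ i, p i ≠ 1) {tstar s : ℝ} (htstar : tstar ≠ 0)
    (hs : 0 < s) :
    HasDerivAt (lowFreqWeightPrimitive p lam tstar) (lowFreqWeight p lam tstar s) s := by
  have h := HasDerivAt.fun_sum (u := Finset.univ) fun i _ =>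
    (hasDerivAt_rpowLogSqPrimitive (a := 2 - 2 * p i) (fun h => hp i (by linarith)) htstar
      hs).const_mul ((lam i : ℝ) ^ 2)
  refine h.congr_deriv ?_
  rw [lowFreqWeight, tau_sq_s4 hs.le, Finset.sum_mul, Finset.sum_div]
  refine Finset.sum_congr rfl fun i _ => ?_
  rw [rpow_sub_one hs.ne']
  ring

lemma lowFreqWeightPrimitive_nonneg (hp : ∀ i, p i < 1) {tstar s : ℝ} (hs : 0 ≤ s) :
    0 ≤ lowFreqWeightPrimitive p lam tstar s :=
  Finset.sum_nonneg fun i _ => mul_nonneg (sq_nonneg _)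
    (rpowLogSqPrimitive_nonneg (by linarith [hp i]) hs)

lemma lowFreqWeightPrimitive_sub_le (hp : ∀ i, p i < 1) {M : ℝ}
    (hM : ∀ i, (1 + 2 * (2 - 2 * p i)⁻¹ ^ 2) / (2 - 2 * p i) ≤ M) {tstar t : ℝ}
    (htstar : 0 < tstar) (htau : tau p lam tstar = 1) (ht : 0 ≤ t) :
    lowFreqWeightPrimitive p lam tstar tstar - lowFreqWeightPrimitive p lam tstar t ≤ M := by
  have hself : lowFreqWeightPrimitive p lam tstar tstar ≤ M * tau p lam tstar ^ 2 := by
    rw [tau_sq_s4 htstar.le, Finset.mul_sum]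
    refine Finset.sum_le_sum fun i _ => ?_
    rw [rpowLogSqPrimitive_self htstar.ne']
    have := mul_le_mul_of_nonneg_left (hM i)
      (by positivity : 0 ≤ tstar ^ (2 - 2 * p i) * (lam i : ℝ) ^ 2)
    linarith
  rw [htau, one_pow, mul_one] at hself
  linarith [lowFreqWeightPrimitive_nonneg (lam := lam) (tstar := tstar) hp ht]

lemma hasDerivAt_Elow {I : Set ℝ} (hsol : IsWaveSol p lam φ ψ I) {tstar s : ℝ} (htstar : tstar ≠ 0)
    (hs : s ∈ I) (hs0 : s ≠ 0) :
    HasDerivAt (Elow φ ψ tstar) (ElowDeriv p lam φ ψ tstar s) s := by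
  obtain ⟨hφ, hψ⟩ := hsol s hs
  have h := (hψ.fun_pow 2).fun_add
    ((hφ.fun_sub (hψ.fun_mul (hasDerivAt_log_div_const htstar hs0))).fun_pow 2)
  refine h.congr_deriv ?_
  simp only [ElowDeriv, Nat.cast_ofNat, Nat.add_one_sub_one, pow_one]
  field_simp
  ring

lemma abs_mul_ElowDeriv_le {tstar s : ℝ} (hs : s ≠ 0) :
    |s * ElowDeriv p lam φ ψ tstar s| ≤
      tau p lam s ^ 2 * (1 + log (s / tstar) ^ 2) * Elow φ ψ tstar s := by
  set L := log (s / tstar)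
  set u := φ s
  set v := L * (φ s - ψ s * L) - ψ s
  have hE : (1 + L ^ 2) * Elow φ ψ tstar s = u ^ 2 + v ^ 2 := by
    simp only [Elow, u, v, L]
    ring
  have huv : |2 * u * v| ≤ u ^ 2 + v ^ 2 :=
    abs_le.2 ⟨by nlinarith [sq_nonneg (u + v)], two_mul_le_add_sq u v⟩
  calc |s * ElowDeriv p lam φ ψ tstar s| = tau p lam s ^ 2 * |2 * u * v| := by
        rw [ElowDeriv, mul_div_cancel₀ _ hs,
          show 2 * tau p lam s ^ 2 * u * v = tau p lam s ^ 2 * (2 * u * v) by ring,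
          abs_mul, abs_of_nonneg (sq_nonneg _)]
    _ ≤ tau p lam s ^ 2 * (u ^ 2 + v ^ 2) := mul_le_mul_of_nonneg_left huv (sq_nonneg _)
    _ = _ := by rw [← hE]; ring

lemma abs_ElowDeriv_le {tstar s : ℝ} (hs : 0 < s) :
    |ElowDeriv p lam φ ψ tstar s| ≤ lowFreqWeight p lam tstar s * Elow φ ψ tstar s := by
  have h : |s * ElowDeriv p lam φ ψ tstar s| ≤ _ := abs_mul_ElowDeriv_le hs.ne'
  rw [abs_mul, abs_of_pos hs, ← le_div_iff₀' hs] at h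
  rwa [lowFreqWeight, div_mul_eq_mul_div]

end

theorem wave_low_freq_energy_estimate_general (D : ℕ) (p : Fin D → ℝ)
    (hp : ∀ i, p i < 1) :
    (∃ C : ℝ, 0 < C ∧
      ∀ (lam : Fin D → ℤ), lam ≠ 0 →
      ∀ tstar : ℝ, 0 < tstar → tstar ≤ 1 → tau p lam tstar = 1 →
      ∀ φ ψ : ℝ → ℝ, IsWaveSol p lam φ ψ (Set.Ioi 0) →
      ∀ t : ℝ, t ∈ Set.Ioc (0:ℝ) tstar →
        ∃ E' : ℝ, HasDerivAt (Elow φ ψ tstar) E' t ∧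
          |t * E'| ≤ C * (tau p lam t ^ 2 * (1 + Real.log (tstar / t) ^ 2))
              * Elow φ ψ tstar t) ∧
    (∃ Clow : ℝ, 0 < Clow ∧
      ∀ (lam : Fin D → ℤ), lam ≠ 0 →
      ∀ tstar : ℝ, 0 < tstar → tstar ≤ 1 → tau p lam tstar = 1 →
      ∀ φ ψ : ℝ → ℝ, IsWaveSol p lam φ ψ (Set.Ioi 0) →
      ∀ t : ℝ, t ∈ Set.Ioc (0:ℝ) tstar →
        Clow⁻¹ * Elow φ ψ tstar t ≤ Elow φ ψ tstar tstar ∧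
        Elow φ ψ tstar tstar ≤ Clow * Elow φ ψ tstar t) := by
  refine ⟨⟨1, one_pos, fun lam _ tstar hts _ _ φ ψ hsol t ⟨ht, _⟩ =>
    ⟨_, hasDerivAt_Elow hsol hts.ne' ht ht.ne', ?_⟩⟩, ?_⟩
  · rw [one_mul, ← inv_div, log_inv, neg_sq]
    exact abs_mul_ElowDeriv_le ht.ne'
  obtain ⟨M, hM⟩ := Finite.exists_le fun i => (1 + 2 * (2 - 2 * p i)⁻¹ ^ 2) / (2 - 2 * p i)
  refine ⟨exp M, exp_pos M, fun lam _ tstar hts _ htau φ ψ hsol t ⟨ht, htle⟩ => ?_⟩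
  have hpos : ∀ s ∈ Set.Icc t tstar, 0 < s := fun s hs => ht.trans_le hs.1
  obtain ⟨hle, hge⟩ := gronwall_two_sided htle
    (fun s hs => hasDerivAt_Elow hsol hts.ne' (hpos s hs) (hpos s hs).ne')
    (fun s hs => hasDerivAt_lowFreqWeightPrimitive (fun i => (hp i).ne) hts.ne' (hpos s hs))
    (fun s hs => abs_ElowDeriv_le (hpos s (Set.Ioo_subset_Icc_self hs)))
  have hexp := exp_le_exp.2 (lowFreqWeightPrimitive_sub_le hp hM hts htau ht.le)
  constructor
  · rw [inv_mul_le_iff₀ (exp_pos M)]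
    exact hle.trans (mul_le_mul_of_nonneg_right hexp (Elow_nonneg _ _))
  · exact hge.trans (mul_le_mul_of_nonneg_right hexp (Elow_nonneg _ _))

/-- Proposition `prop:wave_low_freq`: the low-frequency energy estimate for the wave equation. -/
theorem wave_low_freq_energy_estimate (D : ℕ) (hD : 2 ≤ D) (p : Fin D → ℝ)
    (hp : ∀ i, p i < 1) :
    (∃ C : ℝ, 0 < C ∧
      ∀ (lam : Fin D → ℤ), lam ≠ 0 →
      ∀ tstar : ℝ, 0 < tstar → tstar ≤ 1 → tau p lam tstar = 1 →
      ∀ φ ψ : ℝ → ℝ, IsWaveSol p lam φ ψ (Set.Ioi 0) →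
      ∀ t : ℝ, t ∈ Set.Ioc (0:ℝ) tstar →
        ∃ E' : ℝ, HasDerivAt (Elow φ ψ tstar) E' t ∧
          |t * E'| ≤ C * (tau p lam t ^ 2 * (1 + Real.log (tstar / t) ^ 2))
              * Elow φ ψ tstar t) ∧
    (∃ Clow : ℝ, 0 < Clow ∧
      ∀ (lam : Fin D → ℤ), lam ≠ 0 →
      ∀ tstar : ℝ, 0 < tstar → tstar ≤ 1 → tau p lam tstar = 1 →
      ∀ φ ψ : ℝ → ℝ, IsWaveSol p lam φ ψ (Set.Ioi 0) →
      ∀ t : ℝ, t ∈ Set.Ioc (0:ℝ) tstar →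
        Clow⁻¹ * Elow φ ψ tstar t ≤ Elow φ ψ tstar tstar ∧
        Elow φ ψ tstar tstar ≤ Clow * Elow φ ψ tstar t) :=
  wave_low_freq_energy_estimate_general D p hp
end
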